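/- Let β₁, β₂ ∈ [0,1) and δ ∈ ℝ, and let A'(δ) = [[1 + β₁ + δ(1 + β₂), −(β₁ + δβ₂)],[1, 0]] ∈ ℝ^{2×2}. Then A'(δ) is Schur stable (all complex eigenvalues have modulus strictly less than 1) if and only if −2(1 + β₁)/(1 + 2β₂) < δ < 0. -/
import Mathlib


open Matrix

lemma quad_schur (t d : ℝ) :
    (∀ z : ℂ, z^2 - (t:ℂ)*z + (d:ℂ) = 0 → ‖z‖ < 1) ↔
      (0 < 1 - t + d ∧ 0 < 1 + t + d ∧ |d| < 1) := by
  constructor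
  · intro H
    obtain ⟨s, hs⟩ := IsAlgClosed.exists_pow_nat_eq ((t:ℂ)^2 - 4*(d:ℂ)) (n := 2) (by norm_num)
    set z : ℂ := (t + s)/2 with hzdef
    set w : ℂ := (t - s)/2 with hwdef
    have hz : z^2 - (t:ℂ)*z + d = 0 := by rw [hzdef]; linear_combination hs/4
    have hw : w^2 - (t:ℂ)*w + d = 0 := by rw [hwdef]; linear_combination hs/4
    have hzn := H z hz
    have hwn := H w hw
    have hd : (d:ℂ) = z*w := by rw [hzdef, hwdef]; linear_combination hs/4
    have hsum : z + w = (t:ℂ) := by rw [hzdef, hwdef]; ring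
    by_cases him : z.im = 0
    · have hwim : w.im = 0 := by
        have := congrArg Complex.im hsum
        simp [Complex.add_im, him] at this
        linarith [this]
      set x := z.re
      set y := w.re
      have hzx : z = (x:ℂ) := Complex.ext rfl him
      have hwy : w = (y:ℂ) := Complex.ext rfl hwim
      have hxn : |x| < 1 := by rwa [hzx, Complex.norm_real] at hzn
      have hyn : |y| < 1 := by rwa [hwy, Complex.norm_real] at hwn
      have ht : x + y = t := by
        have := hsum; rw [hzx, hwy] at this; exact_mod_cast this
      have hdxy : d = x * y := by
        have := hd; rw [hzx, hwy] at this; exact_mod_cast this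
      have hx := abs_lt.mp hxn
      have hy := abs_lt.mp hyn
      refine ⟨by nlinarith [hx.1, hx.2, hy.1, hy.2], by nlinarith [hx.1, hx.2, hy.1, hy.2], ?_⟩
      rw [hdxy, abs_mul]
      nlinarith [abs_nonneg x, abs_nonneg y]
    · have hconj : (starRingEnd ℂ z)^2 - (t:ℂ)*(starRingEnd ℂ z) + d = 0 := by
        have := congrArg (starRingEnd ℂ) hz
        simpa using this
      have hcz : starRingEnd ℂ z = w := by
        have h0 : (starRingEnd ℂ z - z) * (starRingEnd ℂ z - w) = 0 := by
          linear_combination hconj - (starRingEnd ℂ z) * hsum - hd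
        rcases mul_eq_zero.mp h0 with h | h
        · exact absurd (Complex.conj_eq_iff_im.mp (sub_eq_zero.mp h)) him
        · exact sub_eq_zero.mp h
      have hdsq : d = Complex.normSq z := by
        have : (d:ℂ) = (Complex.normSq z : ℂ) := by
          rw [hd, ← hcz]; exact Complex.mul_conj z
        exact_mod_cast this
      have htre : t = 2 * z.re := by
        have := hsum
        rw [← hcz] at this
        have h := congrArg Complex.re this
        simp [Complex.add_re, Complex.conj_re] at h
        linarith
      have hnsq : Complex.normSq z = z.re^2 + z.im^2 := by
        simp [Complex.normSq_apply]; ring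
      have hlt : Complex.normSq z < 1 := by
        have : Complex.normSq z = ‖z‖^2 := by
          rw [Complex.normSq_eq_norm_sq]
        rw [this]
        nlinarith [norm_nonneg z]
      have him2 : 0 < z.im^2 := pow_two_pos_of_ne_zero him
      refine ⟨?_, ?_, ?_⟩
      · rw [hdsq, hnsq, htre]; nlinarith [sq_nonneg (1 - z.re)]
      · rw [hdsq, hnsq, htre]; nlinarith [sq_nonneg (1 + z.re)]
      · rw [hdsq]
        rw [abs_of_nonneg (Complex.normSq_nonneg z)]
        exact hlt
  · rintro ⟨h1, h2, h3⟩ z hz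
    have hd := abs_lt.mp h3
    by_cases him : z.im = 0
    · set x := z.re
      have hzx : z = (x:ℂ) := Complex.ext rfl him
      rw [hzx] at hz ⊢
      rw [Complex.norm_real, Real.norm_eq_abs]
      have hx : x^2 - t*x + d = 0 := by exact_mod_cast hz
      rw [abs_lt]
      constructor
      · nlinarith [sq_nonneg (x + 1), sq_nonneg (x - 1)]
      · nlinarith [sq_nonneg (x + 1), sq_nonneg (x - 1)]
    · have hconj : (starRingEnd ℂ z)^2 - (t:ℂ)*(starRingEnd ℂ z) + d = 0 := by
        have := congrArg (starRingEnd ℂ) hz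
        simpa using this
      have hne : starRingEnd ℂ z ≠ z := fun h => him (Complex.conj_eq_iff_im.mp h)
      have hsum : z + starRingEnd ℂ z = (t:ℂ) := by
        have h0 : (z - starRingEnd ℂ z) * (z + starRingEnd ℂ z - t) = 0 := by
          linear_combination hz - hconj
        rcases mul_eq_zero.mp h0 with h | h
        · exact absurd (sub_eq_zero.mp h).symm hne
        · exact sub_eq_zero.mp h
      have hcz2 : starRingEnd ℂ z = (t:ℂ) - z := by linear_combination hsum
      have hdz : (d:ℂ) = z * starRingEnd ℂ z := by linear_combination hz - z * hcz2
      rw [Complex.mul_conj] at hdz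
      have hn : Complex.normSq z = d := by exact_mod_cast hdz.symm
      have habs : ‖z‖^2 = d := by
        rw [← hn, ← Complex.sq_norm]
      nlinarith [norm_nonneg z, hd.2]


/-- For `β₁, β₂ ∈ [0,1)`, the shifted system matrix `A'(δ)` is Schur stable
if and only if `−2(1+β₁)/(1+2β₂) < δ < 0`. -/
theorem shifted_matrix_schur_iff
    (β₁ β₂ δ : ℝ) (hβ₁ : β₁ ∈ Set.Ico (0 : ℝ) 1) (hβ₂ : β₂ ∈ Set.Ico (0 : ℝ) 1) :
    (∀ z ∈ spectrum ℂ
      ((!![1 + β₁ + δ * (1 + β₂), -(β₁ + δ * β₂); 1, 0] : Matrix (Fin 2) (Fin 2) ℝ).map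
        (algebraMap ℝ ℂ)), ‖z‖ < 1)
    ↔ (-(2 * (1 + β₁)) / (1 + 2 * β₂) < δ ∧ δ < 0) := by
  obtain ⟨hb1, hb1'⟩ := hβ₁
  obtain ⟨hb2, hb2'⟩ := hβ₂
  set t := 1 + β₁ + δ * (1 + β₂) with ht
  set d := β₁ + δ * β₂ with hd
  have hspec : ∀ z : ℂ, z ∈ spectrum ℂ
      ((!![t, -d; 1, 0] : Matrix (Fin 2) (Fin 2) ℝ).map (algebraMap ℝ ℂ))
      ↔ z^2 - (t:ℂ)*z + (d:ℂ) = 0 := by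
    intro z
    rw [spectrum.mem_iff, Matrix.isUnit_iff_isUnit_det, isUnit_iff_ne_zero, not_not]
    simp [Matrix.det_fin_two, Matrix.algebraMap_eq_diagonal, Matrix.map_apply]
    constructor <;> intro h <;> linear_combination h
  have key : (∀ z ∈ spectrum ℂ
      ((!![t, -d; 1, 0] : Matrix (Fin 2) (Fin 2) ℝ).map (algebraMap ℝ ℂ)), ‖z‖ < 1)
      ↔ (0 < 1 - t + d ∧ 0 < 1 + t + d ∧ |d| < 1) := by
    rw [← quad_schur t d]
    exact ⟨fun H z hz => H z ((hspec z).mpr hz), fun H z hz => H z ((hspec z).mp hz)⟩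
  rw [key]
  have hpos : (0:ℝ) < 1 + 2 * β₂ := by linarith
  rw [div_lt_iff₀ hpos]
  constructor
  · rintro ⟨h1, h2, h3⟩
    rw [ht] at h1 h2
    rw [hd] at h1 h2
    constructor
    · nlinarith
    · nlinarith
  · rintro ⟨h1, h2⟩
    have habs : |d| < 1 := by
      rw [abs_lt, hd]
      constructor
      · nlinarith [mul_nonneg hb2 (by nlinarith : (0:ℝ) ≤ δ * (1 + 2*β₂) + 2 + 2*β₁)]
      · nlinarith [mul_nonneg hb2 (le_of_lt (neg_pos.mpr h2))]
    refine ⟨?_, ?_, habs⟩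
    · rw [ht, hd]; nlinarith
    · rw [ht, hd]; nlinarith
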